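/- Let h = f/g with f, g ∈ ℤ[x], gcd(f,g)=1, #f, #g ≤ T, and ‖f‖_∞, ‖g‖_∞ ≤ C. Let β be an integer with β ≥ ⌈√(2T)·C⌉, g(β) ≠ 0, g(β+1) ≠ 0. If f₁, g₁ ∈ ℤ[x] satisfy the same bounds T and C, and f(β)g₁(β) = f₁(β)g(β) and f(β+1)g₁(β+1) = f₁(β+1)g(β+1), then f·g₁ = f₁·g as polynomials. -/

import Mathlib

open Polynomial

/- A product `f * g` of polynomials whose coefficients are bounded by `C` has coefficients bounded
by `#f · C²`. If `f * g₁ - f₁ * g` vanishes at `β` and `β + 1`, it is divisible by the monic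
polynomial `(X - β) (X - β - 1)`, whose constant coefficient is `β (β + 1)`; so a nonzero multiple
has its lowest nonzero coefficient of absolute value at least `β (β + 1) > β² ≥ 2 T C²`, which
the coefficient bound rules out. -/

theorem coeff_mul_eq_sum_support {R : Type*} [CommRing R] (f g : R[X]) (k : ℕ) :
    (f * g).coeff k = ∑ i ∈ f.support, f.coeff i * (X ^ i * g).coeff k := by
  conv_lhs => rw [f.as_sum_support_C_mul_X_pow]
  simp only [Finset.sum_mul, finsetSum_coeff, mul_assoc, coeff_C_mul]

theorem abs_coeff_mul_le {R : Type*} [CommRing R] [LinearOrder R] [IsStrictOrderedRing R]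
    (f g : R[X]) {a b : R} (hf : ∀ i, |f.coeff i| ≤ a) (hg : ∀ i, |g.coeff i| ≤ b) (k : ℕ) :
    |(f * g).coeff k| ≤ f.support.card * (a * b) := by
  have hb : 0 ≤ b := (abs_nonneg _).trans (hg 0)
  have hXg : ∀ i, |(X ^ i * g).coeff k| ≤ b := fun i => by
    rw [coeff_X_pow_mul']
    split_ifs
    exacts [hg _, by simpa using hb]
  rw [coeff_mul_eq_sum_support, ← nsmul_eq_mul]
  refine (Finset.abs_sum_le_sum_abs _ _).trans (Finset.sum_le_card_nsmul _ _ _ fun i _ => ?_)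
  rw [abs_mul]
  exact mul_le_mul (hf i) (hXg i) (abs_nonneg _) ((abs_nonneg _).trans (hf i))

theorem eq_zero_of_eval_eq_zero_of_abs_coeff_lt {p : ℤ[X]} {β : ℤ}
    (hp : ∀ i, |p.coeff i| < β * (β + 1)) (h₀ : p.eval β = 0) (h₁ : p.eval (β + 1) = 0) :
    p = 0 := by
  by_contra hp0
  have hβ : 0 < β * (β + 1) := (abs_nonneg _).trans_lt (hp 0)
  have hcop : IsCoprime (X - C β) (X - C (β + 1)) := ⟨1, -1, by simp only [C_add, C_1]; ring⟩
  obtain ⟨q, rfl⟩ := hcop.mul_dvd (dvd_iff_isRoot.mpr h₀) (dvd_iff_isRoot.mpr h₁)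
  have hq : q ≠ 0 := by rintro rfl; simp at hp0
  have htc : ((X - C β) * (X - C (β + 1))).trailingCoeff = β * (β + 1) := by
    rw [trailingCoeff_eq_coeff_zero] <;> simp only [mul_coeff_zero, coeff_sub, coeff_X_zero,
      coeff_C_zero]
    · ring
    · nlinarith
  have hlow := hp ((X - C β) * (X - C (β + 1)) * q).natTrailingDegree
  rw [← trailingCoeff, trailingCoeff_mul, htc, abs_mul, abs_of_pos hβ] at hlow
  have : 1 ≤ |q.trailingCoeff| := Int.one_le_abs (trailingCoeff_nonzero_iff_nonzero.mpr hq)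
  nlinarith

theorem eq_zero_of_eval_eq_zero_of_abs_coeff_le_sq {p : ℤ[X]} {β : ℤ} (hβ : 0 ≤ β)
    (hp : ∀ i, |p.coeff i| ≤ β ^ 2) (h₀ : p.eval β = 0) (h₁ : p.eval (β + 1) = 0) : p = 0 := by
  rcases hβ.eq_or_lt with rfl | hpos
  · ext i
    simpa using hp i
  · exact eq_zero_of_eval_eq_zero_of_abs_coeff_lt (fun i => (hp i).trans_lt (by nlinarith)) h₀ h₁

theorem stmt7_general (f g f₁ g₁ : Polynomial ℤ) (T C : ℕ) (β : ℤ)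
    (hTf : f.support.card ≤ T)
    (hTf₁ : f₁.support.card ≤ T)
    (hfC : ∀ i, |f.coeff i| ≤ (C : ℤ)) (hgC : ∀ i, |g.coeff i| ≤ (C : ℤ))
    (hf₁C : ∀ i, |f₁.coeff i| ≤ (C : ℤ)) (hg₁C : ∀ i, |g₁.coeff i| ≤ (C : ℤ))
    (hβ : (β : ℝ) ≥ Real.sqrt (2 * (T : ℝ)) * (C : ℝ))
    (heq1 : f.eval β * g₁.eval β = f₁.eval β * g.eval β)
    (heq2 : f.eval (β + 1) * g₁.eval (β + 1) = f₁.eval (β + 1) * g.eval (β + 1)) :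
    f * g₁ = f₁ * g := by
  have hβ0 : (0 : ℝ) ≤ β := le_trans (by positivity) hβ
  have hβsq : 2 * (T : ℤ) * (C * C) ≤ β ^ 2 := by
    have := pow_le_pow_left₀ (by positivity) hβ 2
    rw [mul_pow, Real.sq_sqrt (by positivity)] at this
    exact_mod_cast (by linarith : (2 * T * (C * C) : ℝ) ≤ β ^ 2)
  have hprod : ∀ p q : ℤ[X], p.support.card ≤ T → (∀ i, |p.coeff i| ≤ C) → (∀ i, |q.coeff i| ≤ C) →
      ∀ k, |(p * q).coeff k| ≤ T * (C * C) := fun p q hT hp hq k =>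
    (abs_coeff_mul_le p q hp hq k).trans (by gcongr)
  rw [← sub_eq_zero]
  refine eq_zero_of_eval_eq_zero_of_abs_coeff_le_sq (by exact_mod_cast hβ0) (fun k => ?_) ?_ ?_
  · rw [coeff_sub]
    linarith [abs_sub ((f * g₁).coeff k) ((f₁ * g).coeff k), hprod f g₁ hTf hfC hg₁C k,
      hprod f₁ g hTf₁ hf₁C hgC k]
  · simp [heq1]
  · simp [heq2]

theorem stmt7 (f g f₁ g₁ : Polynomial ℤ) (T C : ℕ) (β : ℤ)
    (hcop : IsRelPrime f g)
    (hTf : f.support.card ≤ T) (hTg : g.support.card ≤ T)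
    (hTf₁ : f₁.support.card ≤ T) (hTg₁ : g₁.support.card ≤ T)
    (hfC : ∀ i, |f.coeff i| ≤ (C : ℤ)) (hgC : ∀ i, |g.coeff i| ≤ (C : ℤ))
    (hf₁C : ∀ i, |f₁.coeff i| ≤ (C : ℤ)) (hg₁C : ∀ i, |g₁.coeff i| ≤ (C : ℤ))
    (hβ : (β : ℝ) ≥ Real.sqrt (2 * (T : ℝ)) * (C : ℝ))
    (hgβ : g.eval β ≠ 0) (hgβ' : g.eval (β + 1) ≠ 0)
    (hg₁β : g₁.eval β ≠ 0) (hg₁β' : g₁.eval (β + 1) ≠ 0)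
    (heq1 : f.eval β * g₁.eval β = f₁.eval β * g.eval β)
    (heq2 : f.eval (β + 1) * g₁.eval (β + 1) = f₁.eval (β + 1) * g.eval (β + 1)) :
    f * g₁ = f₁ * g :=
  stmt7_general f g f₁ g₁ T C β hTf hTf₁ hfC hgC hf₁C hg₁C hβ heq1 heq2
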